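/- arXiv:math/0505220 — 3 statements merged into one kernel-verified Lean document; each statement's English description precedes it below -/
import Mathlib

section
/- For real n ≥ 1, radii 0 < r_i < r_o, and pressure p ∈ ℝ, the Norton creep strain rates of the basic stress field with creep constant A = 1, namely ε̇_i(r) = s_i(r)·σ_vM(r)^{n−1} for i ∈ {r, θ, z} and ε̇_rz(r) = s_rz(r)·σ_vM(r)^{n−1}, are given for all r > 0 by ε̇_r(r) = c/r², ε̇_θ(r) = −c/r², ε̇_z(r) = 0, ε̇_rz(r) = 0, where c = 3^{(n−1)/2}·a_r·|a_r|^{n−1}/n^n. -/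
/-- the Norton creep strain rates (with `A = 1`) of the basic
stress field of the homogeneous pressurized pipe are
`ε̇_r = c/r²`, `ε̇_θ = −c/r²`, `ε̇_z = 0`, `ε̇_rz = 0`, where
`c = 3^{(n−1)/2}·a_r·|a_r|^{n−1}/n^n`. -/
theorem stmt_4 (n p ri ro : ℝ) (hn : 1 ≤ n) (hri : 0 < ri) (hio : ri < ro)
    (a ar aθ az c : ℝ)
    (ha : a = p * ri ^ (2 / n) / (ro ^ (2 / n) - ri ^ (2 / n)))
    (har : ar = -(p * ri ^ (2 / n) * ro ^ (2 / n)) / (ro ^ (2 / n) - ri ^ (2 / n)))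
    (haθ : aθ = (n - 2) / n * ar)
    (haz : az = (n - 1) / n * ar)
    (hc : c = 3 ^ ((n - 1) / 2) * ar * |ar| ^ (n - 1) / n ^ n)
    (σr σθ σz σrz : ℝ → ℝ)
    (hσr : σr = fun r => a + ar * r ^ (-2 / n))
    (hσθ : σθ = fun r => a + aθ * r ^ (-2 / n))
    (hσz : σz = fun r => a + az * r ^ (-2 / n))
    (hσrz : σrz = fun _ => 0)
    (sr sθ sz srz vM : ℝ → ℝ)
    (hsr : sr = fun r => σr r - (σr r + σθ r + σz r) / 3)
    (hsθ : sθ = fun r => σθ r - (σr r + σθ r + σz r) / 3)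
    (hsz : sz = fun r => σz r - (σr r + σθ r + σz r) / 3)
    (hsrz : srz = σrz)
    (hvM : vM = fun r => Real.sqrt ((1 / 2) * ((σr r - σθ r) ^ 2 + (σθ r - σz r) ^ 2 +
      (σz r - σr r) ^ 2) + 3 * (σrz r) ^ 2)) :
    ∀ r : ℝ, 0 < r →
      sr r * vM r ^ (n - 1) = c / r ^ 2 ∧
      sθ r * vM r ^ (n - 1) = -(c / r ^ 2) ∧
      sz r * vM r ^ (n - 1) = 0 ∧
      srz r * vM r ^ (n - 1) = 0 := by
  subst haθ haz hc hσr hσθ hσz hσrz hsr hsθ hsz hsrz hvM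
  intro r hr
  simp only
  have hn0 : (0:ℝ) < n := by linarith
  have hnne : n ≠ 0 := ne_of_gt hn0
  set t : ℝ := r ^ (-2 / n) with htdef
  have ht : 0 < t := Real.rpow_pos_of_pos hr _
  have h3 : Real.sqrt 3 ^ 2 = 3 := Real.sq_sqrt (by norm_num)
  have habs : |ar| ^ 2 = ar ^ 2 := sq_abs ar
  have hM0 : 0 ≤ Real.sqrt 3 * |ar| * t / n := div_nonneg (by positivity) hn0.le
  have hvMr : Real.sqrt ((1 / 2) * (((a + ar * t) - (a + (n - 2) / n * ar * t)) ^ 2 +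
      ((a + (n - 2) / n * ar * t) - (a + (n - 1) / n * ar * t)) ^ 2 +
      ((a + (n - 1) / n * ar * t) - (a + ar * t)) ^ 2) + 3 * (0:ℝ) ^ 2)
      = Real.sqrt 3 * |ar| * t / n := by
    have hsq : (Real.sqrt 3 * |ar| * t / n) ^ 2 = 3 * ar ^ 2 * t ^ 2 / n ^ 2 := by
      rw [div_pow, mul_pow, mul_pow, h3, habs]
    have hsum : (1 / 2) * (((a + ar * t) - (a + (n - 2) / n * ar * t)) ^ 2 +
        ((a + (n - 2) / n * ar * t) - (a + (n - 1) / n * ar * t)) ^ 2 +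
        ((a + (n - 1) / n * ar * t) - (a + ar * t)) ^ 2) + 3 * (0:ℝ) ^ 2
        = (Real.sqrt 3 * |ar| * t / n) ^ 2 := by
      rw [hsq]; field_simp; ring
    rw [hsum, Real.sqrt_sq hM0]
  rw [hvMr]
  have hpow : (Real.sqrt 3 * |ar| * t / n) ^ (n - 1)
      = 3 ^ ((n - 1) / 2) * |ar| ^ (n - 1) * t ^ (n - 1) / n ^ (n - 1) := by
    rw [Real.div_rpow (by positivity) hn0.le,
        Real.mul_rpow (by positivity) ht.le,
        Real.mul_rpow (Real.sqrt_nonneg 3) (abs_nonneg ar),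
        Real.sqrt_eq_rpow, ← Real.rpow_mul (by norm_num : (0:ℝ) ≤ 3)]
    ring_nf
  rw [hpow]
  have htn : t ^ n = 1 / r ^ 2 := by
    rw [htdef, ← Real.rpow_mul hr.le]
    have h2 : -2 / n * n = -2 := by field_simp
    rw [h2, show (-2:ℝ) = -((2:ℕ):ℝ) by norm_num, Real.rpow_neg hr.le,
      Real.rpow_natCast]
    rw [one_div]
  have ht1 : t * t ^ (n - 1) = 1 / r ^ 2 := by
    have h1 : t ^ (n - 1) = t ^ n / t := by rw [Real.rpow_sub ht, Real.rpow_one]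
    rw [h1, ← htn]
    field_simp
  have hn1 : n * n ^ (n - 1) = n ^ n := by
    have h1 : n ^ (n - 1) = n ^ n / n := by rw [Real.rpow_sub hn0, Real.rpow_one]
    rw [h1]
    field_simp
  refine ⟨?_, ?_, ?_, ?_⟩
  · have hs : a + ar * t - ((a + ar * t) + (a + (n - 2) / n * ar * t) +
        (a + (n - 1) / n * ar * t)) / 3 = ar / n * t := by
      field_simp; ring
    rw [hs]
    calc ar / n * t * (3 ^ ((n - 1) / 2) * |ar| ^ (n - 1) * t ^ (n - 1) / n ^ (n - 1))
        = 3 ^ ((n - 1) / 2) * ar * |ar| ^ (n - 1) * (t * t ^ (n - 1)) /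
            (n * n ^ (n - 1)) := by ring
      _ = 3 ^ ((n - 1) / 2) * ar * |ar| ^ (n - 1) * (1 / r ^ 2) / n ^ n := by
          rw [ht1, hn1]
      _ = 3 ^ ((n - 1) / 2) * ar * |ar| ^ (n - 1) / n ^ n / r ^ 2 := by ring
  · have hs : a + (n - 2) / n * ar * t - ((a + ar * t) + (a + (n - 2) / n * ar * t) +
        (a + (n - 1) / n * ar * t)) / 3 = -(ar / n * t) := by
      field_simp; ring
    rw [hs]
    calc -(ar / n * t) * (3 ^ ((n - 1) / 2) * |ar| ^ (n - 1) * t ^ (n - 1) / n ^ (n - 1))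
        = -(3 ^ ((n - 1) / 2) * ar * |ar| ^ (n - 1) * (t * t ^ (n - 1)) /
            (n * n ^ (n - 1))) := by ring
      _ = -(3 ^ ((n - 1) / 2) * ar * |ar| ^ (n - 1) * (1 / r ^ 2) / n ^ n) := by
          rw [ht1, hn1]
      _ = -(3 ^ ((n - 1) / 2) * ar * |ar| ^ (n - 1) / n ^ n / r ^ 2) := by ring
  · have hs : a + (n - 1) / n * ar * t - ((a + ar * t) + (a + (n - 2) / n * ar * t) +
        (a + (n - 1) / n * ar * t)) / 3 = 0 := by
      field_simp; ring
    rw [hs, zero_mul]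
  · rw [zero_mul]
end

section
/- Let n ≥ 1 be real, a_r ∈ ℝ with a_r ≠ 0, r > 0. Set K = (√3·(|a_r|/n)·r^{−2/n})^{n−2} and c = 3^{(n−1)/2}·a_r·|a_r|^{n−1}/n^n. Suppose real numbers Δσ_r, Δσ_θ (the jumps of radial and hoop stress across the interface, with zero jumps of σ_z and σ_rz) satisfy the two constitutive jump equations K·((2/3 + (n−1)/2)·Δσ_r + (−1/3 − (n−1)/2)·Δσ_θ) = −c/r² and K·((−1/3 − (n−1)/2)·Δσ_r + (2/3 + (n−1)/2)·Δσ_θ) = c/r². Then Δσ_r = −√3·a_r·|a_r|·n^{−3}·r^{−4/n} and Δσ_θ = √3·a_r·|a_r|·n^{−3}·r^{−4/n}; in particular Δσ_θ = −Δσ_r. -/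
/-!
Adding the two jump equations gives `K/3 · ([σ_r] + [σ_θ]) = 0`, so `[σ_θ] = −[σ_r]` since `K > 0`;
substituting back, the first equation becomes `K·n·[σ_r] = −c/r²`. What remains is the power
bookkeeping showing `c = K·n·r²·√3·a_r·|a_r|·n⁻³·r^{−4/n}`: the exponents of `3`, `|a_r|`, `n`
and `r` on the two sides agree, the powers of `r` cancelling because `−2(n−2)/n + 2 − 4/n = 0`.
-/

open Real

theorem eq_neg_of_mul_symm_system {K α β d x y : ℝ} (hK : K ≠ 0) (hαβ : α + β ≠ 0)
    (h1 : K * (α * x + β * y) = -d) (h2 : K * (β * x + α * y) = d) :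
    y = -x ∧ K * (α - β) * x = -d := by
  have hsum : K * (α + β) * (x + y) = 0 := by linear_combination h1 + h2
  have hy : y = -x := by
    have := (mul_eq_zero.mp hsum).resolve_left (mul_ne_zero hK hαβ)
    linarith
  refine ⟨hy, ?_⟩
  subst hy
  linear_combination h1

theorem rpow_jump_scale {n a r : ℝ} (b : ℝ) (hn : 0 < n) (ha : 0 < a) (hr : 0 < r) :
    (√3 * (a / n) * r ^ (-2 / n)) ^ (n - 2) * n * r ^ 2 *
        (√3 * b * a * n ^ (-3 : ℝ) * r ^ (-4 / n)) =
      3 ^ ((n - 1) / 2) * b * a ^ (n - 1) / n ^ n := by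
  have h3 : (3 : ℝ) ^ ((n - 1) / 2) = 3 ^ (1 / 2 * (n - 2)) * 3 ^ (1 / 2 : ℝ) := by
    rw [← rpow_add (by norm_num)]; ring_nf
  have hA : a ^ (n - 1) = a ^ (n - 2) * a := by
    rw [← rpow_add_one ha.ne']; ring_nf
  have hN : n ^ n = n ^ (n - 2) * n ^ 2 := by
    rw [← rpow_natCast, ← rpow_add hn]; norm_num
  have hR : r ^ (-2 / n * (n - 2)) * r ^ (-4 / n) * r ^ 2 = 1 := by
    rw [← rpow_add hr, ← rpow_natCast, ← rpow_add hr, ← rpow_zero r]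
    congr 1; field_simp; ring
  rw [mul_rpow (by positivity) (by positivity), mul_rpow (by positivity) (by positivity),
    div_rpow ha.le hn.le, ← rpow_mul hr.le, sqrt_eq_rpow, ← rpow_mul (by norm_num),
    rpow_neg hn.le, rpow_ofNat, h3, hA, hN]
  -- opaque powers of `r`, so that `field_simp` does not rewrite their exponents
  generalize r ^ (-2 / n * (n - 2)) = R₁, r ^ (-4 / n) = R₂ at hR ⊢
  field_simp
  linear_combination b * hR

/-- the constitutive jump equations across the interface
determine the stress jumps uniquely:
`[σ_r] = −√3·a_r·|a_r|·n^{−3}·r^{−4/n}`, `[σ_θ] = √3·a_r·|a_r|·n^{−3}·r^{−4/n}`,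
and in particular `[σ_θ] = −[σ_r]`. -/
theorem stmt_7 (n ar r : ℝ) (hn : 1 ≤ n) (har : ar ≠ 0) (hr : 0 < r)
    (K c : ℝ)
    (hK : K = (Real.sqrt 3 * (|ar| / n) * r ^ (-2 / n)) ^ (n - 2))
    (hc : c = 3 ^ ((n - 1) / 2) * ar * |ar| ^ (n - 1) / n ^ n)
    (Δσr Δσθ : ℝ)
    (h1 : K * ((2 / 3 + (n - 1) / 2) * Δσr + (-(1 / 3) - (n - 1) / 2) * Δσθ) = -(c / r ^ 2))
    (h2 : K * ((-(1 / 3) - (n - 1) / 2) * Δσr + (2 / 3 + (n - 1) / 2) * Δσθ) = c / r ^ 2) :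
    Δσr = -(Real.sqrt 3 * ar * |ar| * n ^ (-3 : ℝ) * r ^ (-4 / n)) ∧
    Δσθ = Real.sqrt 3 * ar * |ar| * n ^ (-3 : ℝ) * r ^ (-4 / n) ∧
    Δσθ = -Δσr := by
  have hn0 : 0 < n := by linarith
  have hKpos : 0 < K := hK ▸ rpow_pos_of_pos (by positivity) _
  obtain ⟨hθ, hσr⟩ := eq_neg_of_mul_symm_system hKpos.ne' (by norm_num) h1 h2
  have hc' : c = K * n * r ^ 2 * (√3 * ar * |ar| * n ^ (-3 : ℝ) * r ^ (-4 / n)) := by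
    rw [hc, hK, rpow_jump_scale ar hn0 (abs_pos.mpr har) hr]
  have hΔσr : Δσr = -(√3 * ar * |ar| * n ^ (-3 : ℝ) * r ^ (-4 / n)) := by
    have hαβ : 2 / 3 + (n - 1) / 2 - (-(1 / 3) - (n - 1) / 2) = n := by ring
    apply mul_left_cancel₀ (mul_ne_zero hKpos.ne' hn0.ne')
    rw [← hαβ, hσr, hc', hαβ]
    field_simp
  exact ⟨hΔσr, by rw [hθ, hΔσr, neg_neg], hθ⟩
end

section
/- Let n ≥ 1 be real and A ∈ ℝ. On the space of 3×3 real matrices with Frobenius inner product ⟨X, Y⟩ = tr(Xᵀ·Y), define Φ(σ) = (2A/(3(n+1)))·σ_vM(σ)^{n+1}, where σ_vM(σ) = √((3/2)·⟨dev(σ), dev(σ)⟩) and dev(σ) = σ − (tr(σ)/3)·I. Then at every σ with dev(σ) ≠ 0, Φ is Fréchet differentiable and its gradient (with respect to this inner product) equals the Norton creep map: ∇Φ(σ) = A·dev(σ)·σ_vM(σ)^{n−1}. In other words, Norton's law derives from the potential Φ. -/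
open Matrix

attribute [local instance] Matrix.frobeniusNormedAddCommGroup Matrix.frobeniusNormedSpace

/-- Stress deviator `dev σ = σ − (tr σ / 3)·I`. -/
noncomputable def dev (σ : Matrix (Fin 3) (Fin 3) ℝ) : Matrix (Fin 3) (Fin 3) ℝ :=
  σ - (Matrix.trace σ / 3) • (1 : Matrix (Fin 3) (Fin 3) ℝ)

/-- Von Mises equivalent stress `σ_vM = √((3/2)·⟨dev σ, dev σ⟩)` with the
Frobenius inner product `⟨X, Y⟩ = tr (Xᵀ·Y)`. -/
noncomputable def vonMises (σ : Matrix (Fin 3) (Fin 3) ℝ) : ℝ :=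
  Real.sqrt ((3 / 2) * Matrix.trace ((dev σ)ᵀ * dev σ))

/-- Norton creep map `N(σ) = A·dev(σ)·σ_vM(σ)^{n−1}`. -/
noncomputable def nortonMap (A n : ℝ) (σ : Matrix (Fin 3) (Fin 3) ℝ) :
    Matrix (Fin 3) (Fin 3) ℝ :=
  (A * vonMises σ ^ (n - 1)) • dev σ

/-! Write `Φ = c · σ_vM ^ (n + 1)` and `σ_vM = √((3/2) · q (dev σ))` with `q X = tr (Xᵀ X)`.
The chain rule applies because `dev σ ≠ 0` makes `σ_vM > 0`, where `√` and `x ↦ x ^ (n + 1)` are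
smooth. Since `q` has derivative `2 ⟨X, ·⟩` and `dev σ` is traceless, so that
`⟨dev σ, dev τ⟩ = ⟨dev σ, τ⟩`, the derivative of `Φ` at `σ` is
`c (n + 1) σ_vM ^ n · 3 / (2 σ_vM) · ⟨dev σ, ·⟩ = A σ_vM ^ (n - 1) ⟨dev σ, ·⟩`. -/

section Frobenius

variable {m n : Type*} [Fintype m] [Fintype n]

theorem trace_transpose_mul_eq_sum (X Y : Matrix m n ℝ) :
    trace (Xᵀ * Y) = ∑ i, ∑ j, X i j * Y i j := by
  simp only [trace, diag, mul_apply, transpose_apply]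
  exact Finset.sum_comm

theorem trace_transpose_mul_self_pos {X : Matrix m n ℝ} (hX : X ≠ 0) : 0 < trace (Xᵀ * X) := by
  have h := (posSemidef_conjTranspose_mul_self X).trace_nonneg
  rw [conjTranspose_eq_transpose_of_trivial] at h
  refine h.lt_of_ne' ?_
  simpa [conjTranspose_eq_transpose_of_trivial] using
    trace_conjTranspose_mul_self_eq_zero_iff.not.mpr hX

/- `LinearMap.toContinuousLinearMap` puts the product topology on matrices, which is only
defeq to the Frobenius one; derivatives built from it are therefore compared pointwise by
`change` rather than rewritten at the level of continuous linear maps. -/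
noncomputable def frobeniusPairing (X : Matrix m n ℝ) : Matrix m n ℝ →L[ℝ] ℝ :=
  LinearMap.toContinuousLinearMap (traceLinearMap n ℝ ℝ ∘ₗ mulLeftLinearMap n ℝ Xᵀ)

theorem hasFDerivAt_trace_transpose_mul_self (X : Matrix m n ℝ) :
    HasFDerivAt (fun Y : Matrix m n ℝ => trace (Yᵀ * Y)) ((2 : ℝ) • frobeniusPairing X) X := by
  have hentry (i : m) (j : n) :
      HasFDerivAt (fun Y : Matrix m n ℝ => Y i j)
        (entryLinearMap ℝ ℝ i j).toContinuousLinearMap X :=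
    (entryLinearMap ℝ ℝ i j).toContinuousLinearMap.hasFDerivAt
  have hsum := HasFDerivAt.fun_sum (u := Finset.univ) fun i _ =>
    HasFDerivAt.fun_sum (u := Finset.univ) fun j _ => (hentry i j).fun_mul (hentry i j)
  simp only [trace_transpose_mul_eq_sum]
  refine hsum.congr_fderiv ?_
  ext H
  simp only [_root_.sum_apply, _root_.add_apply]
  change ∑ i, ∑ j, (X i j * H i j + X i j * H i j) = 2 * trace (Xᵀ * H)
  simp_rw [trace_transpose_mul_eq_sum, Finset.mul_sum, two_mul]

end Frobenius

noncomputable def devLinearMap : Matrix (Fin 3) (Fin 3) ℝ →ₗ[ℝ] Matrix (Fin 3) (Fin 3) ℝ where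
  toFun := dev
  map_add' X Y := by
    simp only [dev, trace_add, add_div, add_smul]
    abel
  map_smul' c X := by
    simp only [dev, trace_smul, smul_eq_mul, mul_div_assoc, mul_smul, smul_sub, RingHom.id_apply]

theorem trace_dev (σ : Matrix (Fin 3) (Fin 3) ℝ) : trace (dev σ) = 0 := by
  simp [dev, trace_sub, trace_smul, trace_one]

theorem trace_transpose_dev_mul_dev (σ τ : Matrix (Fin 3) (Fin 3) ℝ) :
    trace ((dev σ)ᵀ * dev τ) = trace ((dev σ)ᵀ * τ) := by
  rw [show dev τ = τ - (trace τ / 3) • (1 : Matrix (Fin 3) (Fin 3) ℝ) from rfl, Matrix.mul_sub,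
    trace_sub, Matrix.mul_smul, trace_smul, Matrix.mul_one, trace_transpose, trace_dev, smul_zero,
    sub_zero]

theorem hasFDerivAt_trace_transpose_dev_mul_dev (σ : Matrix (Fin 3) (Fin 3) ℝ) :
    HasFDerivAt (fun τ => trace ((dev τ)ᵀ * dev τ)) ((2 : ℝ) • frobeniusPairing (dev σ)) σ := by
  refine ((hasFDerivAt_trace_transpose_mul_self (dev σ)).comp σ
    devLinearMap.toContinuousLinearMap.hasFDerivAt).congr_fderiv ?_
  ext τ
  change 2 * trace ((dev σ)ᵀ * dev τ) = 2 * trace ((dev σ)ᵀ * τ)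
  rw [trace_transpose_dev_mul_dev]

theorem vonMises_pos {σ : Matrix (Fin 3) (Fin 3) ℝ} (hσ : dev σ ≠ 0) : 0 < vonMises σ :=
  Real.sqrt_pos.mpr (mul_pos (by norm_num) (trace_transpose_mul_self_pos hσ))

theorem hasFDerivAt_vonMises {σ : Matrix (Fin 3) (Fin 3) ℝ} (hσ : dev σ ≠ 0) :
    HasFDerivAt vonMises ((3 / (2 * vonMises σ)) • frobeniusPairing (dev σ)) σ := by
  refine (((hasFDerivAt_trace_transpose_dev_mul_dev σ).const_mul (3 / 2)).sqrt
    (Real.sqrt_pos.mp (vonMises_pos hσ)).ne').congr_fderiv ?_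
  ext τ
  change 1 / (2 * vonMises σ) * (3 / 2 * (2 * trace ((dev σ)ᵀ * τ)))
    = 3 / (2 * vonMises σ) * trace ((dev σ)ᵀ * τ)
  ring

noncomputable def nortonPotential (A n : ℝ) (σ : Matrix (Fin 3) (Fin 3) ℝ) : ℝ :=
  2 * A / (3 * (n + 1)) * vonMises σ ^ (n + 1)

theorem hasFDerivAt_nortonPotential {A n : ℝ} (hn : n + 1 ≠ 0) {σ : Matrix (Fin 3) (Fin 3) ℝ}
    (hσ : dev σ ≠ 0) :
    HasFDerivAt (nortonPotential A n) (frobeniusPairing (nortonMap A n σ)) σ := by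
  have hvm := vonMises_pos hσ
  refine (((hasFDerivAt_vonMises hσ).rpow_const (p := n + 1) (Or.inl hvm.ne')).const_mul
    (2 * A / (3 * (n + 1)))).congr_fderiv ?_
  ext τ
  change 2 * A / (3 * (n + 1)) * ((n + 1) * vonMises σ ^ (n + 1 - 1) *
      (3 / (2 * vonMises σ) * trace ((dev σ)ᵀ * τ))) = trace ((nortonMap A n σ)ᵀ * τ)
  rw [nortonMap, transpose_smul, smul_mul, trace_smul, smul_eq_mul, add_sub_cancel_right,
    Real.rpow_sub_one hvm.ne']
  field_simp

/-- Norton's law derives from the potential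
`Φ(σ) = (2A/(3(n+1)))·σ_vM(σ)^{n+1}`: at every `σ` with `dev σ ≠ 0`, `Φ` is
Fréchet differentiable and its gradient with respect to the Frobenius inner
product `⟨X, Y⟩ = tr (Xᵀ·Y)` is the Norton creep map, i.e. the derivative acts
as `τ ↦ ⟨N(σ), τ⟩ = tr ((A·σ_vM(σ)^{n−1}·dev σ)ᵀ·τ)`. -/
theorem stmt_10 (n A : ℝ) (hn : 1 ≤ n)
    (σ : Matrix (Fin 3) (Fin 3) ℝ) (hσ : dev σ ≠ 0) :
    ∃ L : Matrix (Fin 3) (Fin 3) ℝ →L[ℝ] ℝ,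
      HasFDerivAt (fun τ => (2 * A / (3 * (n + 1))) * vonMises τ ^ (n + 1)) L σ ∧
      ∀ τ : Matrix (Fin 3) (Fin 3) ℝ, L τ = Matrix.trace ((nortonMap A n σ)ᵀ * τ) :=
  ⟨frobeniusPairing (nortonMap A n σ), hasFDerivAt_nortonPotential (by linarith) hσ, fun _ => rfl⟩
end
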